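/- arXiv:2512.24611 — 2 statements merged into one kernel-verified Lean document; each statement's English description precedes it below -/
import Mathlib

section
/- (FDR control of Lfdr-based decision rules.) Let (Ω, ℱ, P) be a probability space, 𝒢 ⊆ ℱ a sub-σ-algebra, m ≥ 1, and α ∈ [0, 1]. For i = 1, …, m let θ_i : Ω → {0, 1} be ℱ-measurable (true non-null indicators), let δ_i : Ω → {0, 1} be 𝒢-measurable (decisions), and let L_i be a 𝒢-measurable version of the conditional probability E[1 − θ_i | 𝒢] (the local false discovery rate). If almost surely Σ_{i=1}^m L_i δ_i ≤ α · max(Σ_{i=1}^m δ_i, 1), then the false discovery rate satisfies FDR = E[ ( Σ_{i=1}^m (1 − θ_i) δ_i ) / max( Σ_{i=1}^m δ_i, 1 ) ] ≤ α. -/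
open MeasureTheory ProbabilityTheory

/-- **FDR control of Lfdr-based decision rules.** On a probability space with
sub-σ-algebra `𝒢`, if `θ_i ∈ {0,1}` are the true non-null indicators, `δ_i ∈ {0,1}` are
`𝒢`-measurable decisions, `L_i` is a version of `E[1 - θ_i | 𝒢]`, and almost surely
`Σ_i L_i δ_i ≤ α · max(Σ_i δ_i, 1)`, then `FDR = E[Σ_i (1-θ_i)δ_i / max(Σ_i δ_i, 1)] ≤ α`. -/
theorem stmt13 {Ω : Type*} (𝒢 : MeasurableSpace Ω) [m0 : MeasurableSpace Ω] (P : Measure Ω) [IsProbabilityMeasure P]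
    (h𝒢 : 𝒢 ≤ m0) (m : ℕ) (hm : 1 ≤ m)
    (α : ℝ) (hα : α ∈ Set.Icc (0 : ℝ) 1)
    (θ δ L : Fin m → Ω → ℝ)
    (hθ_meas : ∀ i, Measurable (θ i)) (hθ01 : ∀ i ω, θ i ω = 0 ∨ θ i ω = 1)
    (hδ_meas : ∀ i, Measurable[𝒢] (δ i)) (hδ01 : ∀ i ω, δ i ω = 0 ∨ δ i ω = 1)
    (hL : ∀ i, L i =ᵐ[P] P[fun ω => 1 - θ i ω | 𝒢])
    (hcon : ∀ᵐ ω ∂P, ∑ i, L i ω * δ i ω ≤ α * max (∑ i, δ i ω) 1) :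
    ∫ ω, (∑ i, (1 - θ i ω) * δ i ω) / max (∑ i, δ i ω) 1 ∂P ≤ α := by
  classical
  -- the denominator
  set D : Ω → ℝ := fun ω => max (∑ i, δ i ω) 1 with hD
  have hD_pos : ∀ ω, (1:ℝ) ≤ D ω := fun ω => le_max_right _ _
  have hD_meas : Measurable[𝒢] D := (Finset.measurable_sum _ fun i _ => hδ_meas i).max measurable_const
  -- the weights g i = δ i / D
  set g : Fin m → Ω → ℝ := fun i ω => δ i ω / D ω with hg
  have hg_meas : ∀ i, Measurable[𝒢] (g i) := fun i => (hδ_meas i).div hD_meas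
  have hg_nonneg : ∀ i ω, 0 ≤ g i ω := by
    intro i ω
    apply div_nonneg
    · rcases hδ01 i ω with h | h <;> simp [h]
    · linarith [hD_pos ω]
  have hg_le_one : ∀ i ω, g i ω ≤ 1 := by
    intro i ω
    rw [div_le_one (by linarith [hD_pos ω])]
    rcases hδ01 i ω with h | h
    · simp [h]; linarith [hD_pos ω]
    · calc δ i ω ≤ ∑ j, δ j ω := by
            apply Finset.single_le_sum (f := fun j => δ j ω) (fun j _ => ?_) (Finset.mem_univ i)
            rcases hδ01 j ω with h' | h' <;> simp [h']
        _ ≤ D ω := le_max_left _ _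
  have hg_bound : ∀ i, ∀ᵐ ω ∂P, ‖g i ω‖ ≤ 1 := by
    intro i
    filter_upwards with ω
    rw [Real.norm_eq_abs, abs_le]
    exact ⟨by linarith [hg_nonneg i ω], hg_le_one i ω⟩
  have hθ_bound : ∀ i ω, ‖1 - θ i ω‖ ≤ 1 := by
    intro i ω; rcases hθ01 i ω with h | h <;> simp [h]
  -- integrability facts
  have hθ_int : ∀ i, Integrable (fun ω => 1 - θ i ω) P := by
    intro i
    have hmeas : Measurable[m0] (fun ω => 1 - θ i ω) := (((hθ_meas i).const_sub 1))
    refine (integrable_const (1:ℝ)).mono' hmeas.aestronglyMeasurable ?_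
    filter_upwards with ω using hθ_bound i ω
  have hg_sm : ∀ i, StronglyMeasurable[𝒢] (g i) := fun i => (hg_meas i).stronglyMeasurable
  have hg_asm : ∀ i, AEStronglyMeasurable[m0] (g i) P := fun i =>
    ((hg_meas i).mono h𝒢 le_rfl).aestronglyMeasurable
  have h_int1 : ∀ i, Integrable (fun ω => g i ω * (1 - θ i ω)) P := fun i =>
    (hθ_int i).bdd_mul (hg_asm i) (hg_bound i)
  -- key identity: ∫ g i * (1-θ i) = ∫ g i * L i
  have key : ∀ i, ∫ ω, g i ω * (1 - θ i ω) ∂P = ∫ ω, g i ω * L i ω ∂P := by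
    intro i
    have hpull : P[(g i) * (fun ω => 1 - θ i ω) | 𝒢] =ᵐ[P] (g i) * P[fun ω => 1 - θ i ω | 𝒢] :=
      condExp_stronglyMeasurable_mul_of_bound h𝒢 (hg_sm i) (hθ_int i) 1 (hg_bound i)
    have h1 : ∫ ω, g i ω * (1 - θ i ω) ∂P = ∫ ω, (P[(g i) * (fun ω => 1 - θ i ω) | 𝒢]) ω ∂P :=
      (integral_condExp h𝒢).symm
    rw [h1, integral_congr_ae hpull, integral_congr_ae ?_]
    filter_upwards [hL i] with ω hω
    simp [hω]
  -- rewrite the LHS integrand as a sum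
  have h_eq : ∀ ω, (∑ i, (1 - θ i ω) * δ i ω) / D ω = ∑ i, g i ω * (1 - θ i ω) := by
    intro ω
    rw [Finset.sum_div]
    refine Finset.sum_congr rfl fun i _ => ?_
    simp only [hg]
    field_simp
  calc ∫ ω, (∑ i, (1 - θ i ω) * δ i ω) / D ω ∂P
      = ∫ ω, ∑ i, g i ω * (1 - θ i ω) ∂P := by simp_rw [h_eq]
    _ = ∑ i, ∫ ω, g i ω * (1 - θ i ω) ∂P := integral_finset_sum _ fun i _ => h_int1 i
    _ = ∑ i, ∫ ω, g i ω * L i ω ∂P := by simp_rw [key]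
    _ = ∫ ω, ∑ i, g i ω * L i ω ∂P := by
        refine (integral_finset_sum _ fun i _ => ?_).symm
        have : (fun ω => g i ω * L i ω) =ᵐ[P]
            fun ω => g i ω * (P[fun ω => 1 - θ i ω | 𝒢]) ω := by
          filter_upwards [hL i] with ω hω using by rw [hω]
        refine Integrable.congr ?_ this.symm
        exact integrable_condExp.bdd_mul (hg_asm i) (hg_bound i)
    _ ≤ ∫ ω, α ∂P := by
        refine integral_mono_ae ?_ (integrable_const α) ?_
        · refine integrable_finset_sum _ fun i _ => ?_
          have : (fun ω => g i ω * L i ω) =ᵐ[P]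
              fun ω => g i ω * (P[fun ω => 1 - θ i ω | 𝒢]) ω := by
            filter_upwards [hL i] with ω hω using by rw [hω]
          exact Integrable.congr (integrable_condExp.bdd_mul (hg_asm i) (hg_bound i)) this.symm
        · filter_upwards [hcon] with ω hω
          have hDpos : (0:ℝ) < D ω := lt_of_lt_of_le one_pos (hD_pos ω)
          have : ∑ i, g i ω * L i ω = (∑ i, L i ω * δ i ω) / D ω := by
            rw [Finset.sum_div]
            refine Finset.sum_congr rfl fun i _ => ?_
            simp only [hg]; field_simp
          rw [this, div_le_iff₀ hDpos]
          calc ∑ i, L i ω * δ i ω ≤ α * D ω := hω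
            _ = α * D ω := rfl
    _ = α := by simp
end

section
/- (The adaptive threshold rule satisfies the average-Lfdr constraint.) Let m ≥ 1, α ∈ [0, 1], and let L_1, …, L_m ∈ [0, 1] be pairwise distinct, with order statistics L_(1) < L_(2) < … < L_(m). Define τ* = max{ t ∈ {1, …, m} : (1/t) Σ_{i=1}^t L_(i) ≤ α } with the convention max ∅ = 0, and define δ_i = 1{ L_i ≤ L_(τ*) } for τ* ≥ 1 and δ_i = 0 for all i if τ* = 0. Then Σ_{i=1}^m δ_i = τ* and Σ_{i=1}^m L_i δ_i ≤ α · max( Σ_{i=1}^m δ_i, 1 ). -/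
/-! Reindexed by the sorting permutation `σ`, the rule rejects exactly the ranks `0, …, τ* - 1`,
so it makes `τ*` rejections with total Lfdr `Σ_{k < τ*} L_(k)`, which is at most `α τ*` by the
choice of `τ*`; for `τ* = 0` the bound reduces to `0 ≤ α`. -/

/-- The `i`-th smallest value (indexed from `0`) among `L_1, …, L_m`, given a sorting
permutation `σ` (so that `i ↦ L (σ i)` is strictly monotone); junk value `0` for `i ≥ m`. -/
def ordStat (m : ℕ) (L : Fin m → ℝ) (σ : Equiv.Perm (Fin m)) (i : ℕ) : ℝ :=
  if h : i < m then L (σ ⟨i, h⟩) else 0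

/-- The adaptive threshold `τ* = max{t ∈ {1, …, m} : (1/t) Σ_{i=1}^t L_(i) ≤ α}`, with the
convention `max ∅ = 0`. -/
noncomputable def tauStar (m : ℕ) (α : ℝ) (L : Fin m → ℝ) (σ : Equiv.Perm (Fin m)) : ℕ :=
  open Classical in
  Nat.findGreatest
    (fun t => 1 ≤ t ∧ (∑ i ∈ Finset.range t, ordStat m L σ i) / t ≤ α) m

/-- The decision rule: reject `i` iff `L_i ≤ L_(τ*)` when `τ* ≥ 1`, reject nothing when
`τ* = 0`. -/
noncomputable def adaptDecision (m : ℕ) (α : ℝ) (L : Fin m → ℝ) (σ : Equiv.Perm (Fin m))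
    (i : Fin m) : ℝ :=
  if tauStar m α L σ = 0 then 0
  else if L i ≤ ordStat m L σ (tauStar m α L σ - 1) then 1 else 0

open Finset

theorem Fin.sum_univ_ite_val_lt {M : Type*} [AddCommMonoid M] (f : ℕ → M) {n τ : ℕ}
    (hτ : τ ≤ n) :
    ∑ j : Fin n, (if (j : ℕ) < τ then f j else 0) = ∑ k ∈ range τ, f k := by
  rw [Fin.sum_univ_eq_sum_range (fun k => if k < τ then f k else 0), ← sum_filter]
  congr 1
  ext k
  simp only [mem_filter, mem_range]
  omega

section AdaptiveThreshold

variable {m : ℕ} {α : ℝ} {L : Fin m → ℝ} {σ : Equiv.Perm (Fin m)}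

theorem ordStat_val (j : Fin m) : ordStat m L σ j = L (σ j) := by
  simp [ordStat]

theorem tauStar_le : tauStar m α L σ ≤ m :=
  Nat.findGreatest_le m

theorem sum_range_ordStat_le_mul_max (hα : 0 ≤ α) :
    ∑ k ∈ range (tauStar m α L σ), ordStat m L σ k ≤ α * max (tauStar m α L σ : ℝ) 1 := by
  set τ := tauStar m α L σ with hτ
  rcases Nat.eq_zero_or_pos τ with h0 | hpos
  · simpa [h0] using hα
  · have hmean : (∑ k ∈ range τ, ordStat m L σ k) / τ ≤ α :=
      (Nat.findGreatest_of_ne_zero hτ.symm hpos.ne').2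
    have hτ1 : (1 : ℝ) ≤ τ := by exact_mod_cast hpos
    rwa [max_eq_left hτ1, ← div_le_iff₀ (by linarith)]

theorem adaptDecision_apply_perm (hσ : StrictMono (fun i => L (σ i))) (j : Fin m) :
    adaptDecision m α L σ (σ j) = if (j : ℕ) < tauStar m α L σ then 1 else 0 := by
  set τ := tauStar m α L σ with hτ
  rcases Nat.eq_zero_or_pos τ with h0 | hpos
  · simp [adaptDecision, ← hτ, h0]
  · have hlast : τ - 1 < m := by have := (tauStar_le : τ ≤ m); omega
    have hthreshold : ordStat m L σ (τ - 1) = L (σ ⟨τ - 1, hlast⟩) := ordStat_val ⟨τ - 1, hlast⟩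
    have hrank : L (σ j) ≤ ordStat m L σ (τ - 1) ↔ (j : ℕ) < τ := by
      rw [hthreshold, hσ.le_iff_le, Fin.le_def]
      change (j : ℕ) ≤ τ - 1 ↔ (j : ℕ) < τ
      omega
    simp only [adaptDecision, ← hτ, hpos.ne', if_false, if_congr hrank rfl rfl]

theorem sum_adaptDecision (hσ : StrictMono (fun i => L (σ i))) :
    ∑ i, adaptDecision m α L σ i = tauStar m α L σ := by
  rw [← Equiv.sum_comp σ]
  simp only [adaptDecision_apply_perm hσ]
  rw [Fin.sum_univ_ite_val_lt (fun _ => (1 : ℝ)) tauStar_le]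
  simp

theorem sum_mul_adaptDecision (hσ : StrictMono (fun i => L (σ i))) :
    ∑ i, L i * adaptDecision m α L σ i = ∑ k ∈ range (tauStar m α L σ), ordStat m L σ k := by
  rw [← Equiv.sum_comp σ, ← Fin.sum_univ_ite_val_lt _ tauStar_le]
  refine sum_congr rfl fun j _ => ?_
  rw [adaptDecision_apply_perm hσ, mul_ite, mul_one, mul_zero, ordStat_val]

end AdaptiveThreshold

theorem stmt14_general (m : ℕ) (α : ℝ) (hα : α ∈ Set.Icc (0 : ℝ) 1)
    (L : Fin m → ℝ)
    (σ : Equiv.Perm (Fin m)) (hσ : StrictMono (fun i => L (σ i))) :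
    (∑ i, adaptDecision m α L σ i) = (tauStar m α L σ : ℝ) ∧
    ∑ i, L i * adaptDecision m α L σ i ≤
      α * max (∑ i, adaptDecision m α L σ i) 1 := by
  refine ⟨sum_adaptDecision hσ, ?_⟩
  rw [sum_adaptDecision hσ, sum_mul_adaptDecision hσ]
  exact sum_range_ordStat_le_mul_max hα.1

/-- **The adaptive threshold rule satisfies the average-Lfdr constraint.**
For pairwise distinct `L_1, …, L_m ∈ [0,1]` with sorting permutation `σ`, the adaptive
threshold rule rejects exactly `τ*` hypotheses and satisfies
`Σ_i L_i δ_i ≤ α · max(Σ_i δ_i, 1)`. -/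
theorem stmt14 (m : ℕ) (hm : 1 ≤ m) (α : ℝ) (hα : α ∈ Set.Icc (0 : ℝ) 1)
    (L : Fin m → ℝ) (hL01 : ∀ i, L i ∈ Set.Icc (0 : ℝ) 1)
    (hL_inj : Function.Injective L)
    (σ : Equiv.Perm (Fin m)) (hσ : StrictMono (fun i => L (σ i))) :
    (∑ i, adaptDecision m α L σ i) = (tauStar m α L σ : ℝ) ∧
    ∑ i, L i * adaptDecision m α L σ i ≤
      α * max (∑ i, adaptDecision m α L σ i) 1 :=
  stmt14_general m α hα L σ hσ
end
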